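/- Let n ≥ 2 be an integer, α ∈ [0,1), c̃ > 0, and λ := arccosh((1 + c̃⁻¹)/(1 − α)). Let B be the (n−1)×(n−1) tridiagonal matrix with diagonal entries 1 + c̃⁻¹ and off-diagonal entries −(1−α)/2. Then B is invertible and for all 1 ≤ i, j ≤ n−1, ((1−α)/2)·B⁻¹_{ij} = sinh(min(i,j)·λ)·sinh((n − max(i,j))λ) / (sinh(λ)·sinh(nλ)). -/

import Mathlib

/-!
With `cosh λ = (1 + c̃⁻¹)/(1 - α)`, the matrix `B` is `(1 - α)/2` times the second-difference
operator `2 cosh λ · u p - u (p - 1) - u (p + 1)` with Dirichlet conditions `u 0 = u n = 0`.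
For fixed `q`, the column `p ↦ sinh (min p q · λ) sinh ((n - max p q) · λ)` satisfies these
boundary conditions, and by the addition formula for `sinh` it solves the homogeneous recurrence
at every `p ≠ q`, while at `p = q` the defect is `sinh λ sinh (n λ)`. Hence `B` times this kernel
is `(1 - α)/2 · sinh λ sinh (n λ) · 1`, a nonzero multiple of the identity since `λ > 0`.
-/

open Real Matrix Finset

noncomputable section

/-- Real inverse hyperbolic cosine. -/
def realArcosh (x : ℝ) : ℝ := Real.log (x + Real.sqrt (x ^ 2 - 1))

/-- The regularized reduced kernel matrix: tridiagonal with diagonal `1 + c̃⁻¹`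
and off-diagonal `−(1−α)/2`. -/
def Bmat (n : ℕ) (α ctil : ℝ) : Matrix (Fin (n - 1)) (Fin (n - 1)) ℝ :=
  fun i j =>
    if i = j then 1 + ctil⁻¹
    else if (i : ℕ) + 1 = (j : ℕ) ∨ (j : ℕ) + 1 = (i : ℕ) then -((1 - α) / 2)
    else 0

lemma cosh_realArcosh {x : ℝ} (hx : 1 ≤ x) : cosh (realArcosh x) = x := by
  have hroot : √(x ^ 2 - 1) ^ 2 = x ^ 2 - 1 := sq_sqrt (by nlinarith)
  have hpos : 0 < x + √(x ^ 2 - 1) := by positivity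
  rw [realArcosh, cosh_eq, exp_neg, exp_log hpos]
  field_simp
  nlinarith

lemma realArcosh_pos {x : ℝ} (hx : 1 < x) : 0 < realArcosh x :=
  log_pos (by linarith [sqrt_nonneg (x ^ 2 - 1)])

/-- Up to the factor `sinh λ sinh (N λ)`, the Green's function of `u ↦ 2 cosh λ · u p - u (p - 1) -
u (p + 1)` on `{1, …, N - 1}` with boundary values `u 0 = u N = 0`. -/
def sinhGreen (N : ℕ) (lam : ℝ) (p q : ℕ) : ℝ :=
  sinh (min (p : ℝ) q * lam) * sinh ((N - max (p : ℝ) q) * lam)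

lemma sinhGreen_zero_left (N : ℕ) (lam : ℝ) (q : ℕ) : sinhGreen N lam 0 q = 0 := by
  simp [sinhGreen]

lemma sinhGreen_self_left {N q : ℕ} (lam : ℝ) (hq : q ≤ N) : sinhGreen N lam N q = 0 := by
  have : max (N : ℝ) q = N := max_eq_left (by exact_mod_cast hq)
  simp [sinhGreen, this]

lemma sinhGreen_recurrence (N p q : ℕ) (lam : ℝ) :
    2 * cosh lam * sinhGreen N lam (p + 1) q - (sinhGreen N lam p q + sinhGreen N lam (p + 2) q)
      = if p + 1 = q then sinh lam * sinh (N * lam) else 0 := by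
  simp only [sinhGreen]
  push_cast
  rcases lt_trichotomy (p + 1) q with hlt | rfl | hgt
  · have hq : (p : ℝ) + 2 ≤ q := by exact_mod_cast hlt
    rw [if_neg hlt.ne, min_eq_left (by linarith), min_eq_left (by linarith),
      min_eq_left (by linarith), max_eq_right (by linarith), max_eq_right (by linarith),
      max_eq_right (by linarith), show (p : ℝ) * lam = ((p : ℝ) + 1) * lam - lam by ring,
      show ((p : ℝ) + 2) * lam = ((p : ℝ) + 1) * lam + lam by ring, sinh_add, sinh_sub]
    ring
  · push_cast
    rw [if_pos rfl, min_self, max_self, min_eq_left (by linarith), min_eq_right (by linarith),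
      max_eq_right (by linarith), max_eq_left (by linarith),
      show (N : ℝ) * lam = ((p : ℝ) + 1) * lam + (N - ((p : ℝ) + 1)) * lam by ring,
      show (p : ℝ) * lam = ((p : ℝ) + 1) * lam - lam by ring,
      show (N - ((p : ℝ) + 2)) * lam = (N - ((p : ℝ) + 1)) * lam - lam by ring,
      sinh_add, sinh_sub, sinh_sub]
    ring
  · have hq : (q : ℝ) ≤ p := by exact_mod_cast Nat.lt_succ_iff.mp hgt
    rw [if_neg hgt.ne', min_eq_right (by linarith), min_eq_right (by linarith),
      min_eq_right (by linarith), max_eq_left (by linarith), max_eq_left (by linarith),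
      max_eq_left (by linarith), show (N - (p : ℝ)) * lam = (N - ((p : ℝ) + 1)) * lam + lam by ring,
      show (N - ((p : ℝ) + 2)) * lam = (N - ((p : ℝ) + 1)) * lam - lam by ring, sinh_add, sinh_sub]
    ring

lemma sum_range_tridiagonal_mul {m i : ℕ} (hi : i < m) (a b : ℝ) {v : ℕ → ℝ}
    (hv₀ : v 0 = 0) (hvₘ : v (m + 1) = 0) :
    ∑ k ∈ range m, (if i = k then a else if i + 1 = k ∨ k + 1 = i then b else 0) * v (k + 1)
      = a * v (i + 1) + b * (v i + v (i + 2)) := by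
  have hsplit : ∀ k ∈ range m,
      (if i = k then a else if i + 1 = k ∨ k + 1 = i then b else 0) * v (k + 1)
        = (if i = k then a * v (i + 1) else 0) + (if i + 1 = k then b * v (i + 2) else 0)
          + (if i = k + 1 then b * v i else 0) := by
    intro k _
    split_ifs <;> subst_vars <;> first | omega | ring
  have hright : (if i + 1 ∈ range m then b * v (i + 2) else 0) = b * v (i + 2) := by
    split_ifs with h
    · rfl
    · rw [show i + 2 = m + 1 by simp at h; omega, hvₘ, mul_zero]
  have hleft : ∑ k ∈ range m, (if i = k + 1 then b * v i else 0) = b * v i := by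
    rcases i with _ | i
    · simp [hv₀]
    · simp only [add_left_inj, eq_comm (a := i)]
      rw [sum_ite_eq' _ i, if_pos (mem_range.2 (by omega))]
  rw [sum_congr rfl hsplit, sum_add_distrib, sum_add_distrib, sum_ite_eq, sum_ite_eq,
    if_pos (mem_range.2 hi), hright, hleft]
  ring

lemma Bmat_mul_sinhGreen {n : ℕ} {α ctil lam : ℝ} (hcosh : 1 + ctil⁻¹ = (1 - α) * cosh lam) :
    Bmat n α ctil * Matrix.of (fun i j : Fin (n - 1) => sinhGreen n lam (i + 1) (j + 1))
      = ((1 - α) / 2 * (sinh lam * sinh (n * lam))) • (1 : Matrix (Fin (n - 1)) (Fin (n - 1)) ℝ) := by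
  ext i j
  have hi := i.isLt
  have hrow := sum_range_tridiagonal_mul hi (1 + ctil⁻¹) (-((1 - α) / 2))
    (v := fun p => sinhGreen n lam p (j + 1)) (sinhGreen_zero_left ..)
    (by rw [Nat.sub_add_cancel (by omega)]; exact sinhGreen_self_left lam (by omega))
  simp only [mul_apply, Bmat, of_apply, ← Fin.val_inj]
  rw [Fin.sum_univ_eq_sum_range (fun k => (if (i : ℕ) = k then 1 + ctil⁻¹ else
      if (i : ℕ) + 1 = k ∨ k + 1 = i then -((1 - α) / 2) else 0) * sinhGreen n lam (k + 1) (j + 1)),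
    hrow, Matrix.smul_apply, one_apply, smul_eq_mul, hcosh]
  have hrec := sinhGreen_recurrence n i (j + 1) lam
  simp only [add_left_inj, Fin.val_inj] at hrec
  split_ifs at hrec ⊢ <;> linear_combination (1 - α) / 2 * hrec

/-- Closed form of the inverse of the regularized reduced kernel matrix,
with 1-based indices `(i : ℕ) + 1`, `(j : ℕ) + 1`. -/
theorem reduced_kernel_inverse
    (n : ℕ) (hn : 2 ≤ n) (α ctil : ℝ) (hα0 : 0 ≤ α) (hα1 : α < 1) (hc : 0 < ctil) :
    IsUnit (Bmat n α ctil) ∧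
      ∀ i j : Fin (n - 1),
        ((1 - α) / 2) * (Bmat n α ctil)⁻¹ i j =
          Real.sinh (min ((i : ℝ) + 1) ((j : ℝ) + 1) *
              realArcosh ((1 + ctil⁻¹) / (1 - α))) *
            Real.sinh (((n : ℝ) - max ((i : ℝ) + 1) ((j : ℝ) + 1)) *
              realArcosh ((1 + ctil⁻¹) / (1 - α))) /
          (Real.sinh (realArcosh ((1 + ctil⁻¹) / (1 - α))) *
            Real.sinh ((n : ℝ) * realArcosh ((1 + ctil⁻¹) / (1 - α)))) := by
  set lam := realArcosh ((1 + ctil⁻¹) / (1 - α))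
  have hα : 0 < 1 - α := by linarith
  have hx : 1 < (1 + ctil⁻¹) / (1 - α) := by
    rw [one_lt_div hα]; linarith [inv_pos.2 hc]
  have hcosh : 1 + ctil⁻¹ = (1 - α) * cosh lam := by
    rw [cosh_realArcosh hx.le]; field_simp
  have hlam : 0 < lam := realArcosh_pos hx
  have hscale : (1 - α) / 2 * (sinh lam * sinh (n * lam)) ≠ 0 := by
    have : 0 < sinh (n * lam) := sinh_pos_iff.2 (by positivity)
    have : 0 < sinh lam := sinh_pos_iff.2 hlam
    positivity
  have hmul := Bmat_mul_sinhGreen (n := n) hcosh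
  rw [← inv_smul_eq_iff₀ hscale, ← mul_smul_comm] at hmul
  refine ⟨IsUnit.of_mul_eq_one _ hmul, fun i j => ?_⟩
  rw [inv_eq_right_inv hmul, Matrix.smul_apply, of_apply, sinhGreen, smul_eq_mul]
  push_cast
  field_simp
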